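/- arXiv:2107.03285 — 5 statements merged into one kernel-verified Lean document; each statement's English description precedes it below -/
import Mathlib

section
/- Let A be an n×n real matrix, B a p×n matrix, C a p×p matrix, Cx an n×n invertible matrix, and Cp an n×p matrix. Define S = -Cx⁻¹ Cp (the sensitivity matrix) and H = Sᵀ A S + B S + Sᵀ Bᵀ + C. If the vectors δx ∈ ℝⁿ, δp ∈ ℝᵖ, δλ ∈ ℝⁿ satisfy the block system A δx + Bᵀ δp + Cxᵀ δλ = 0, B δx + C δp + Cpᵀ δλ = -g, and Cx δx + Cp δp = 0 for some g ∈ ℝᵖ, then H δp = -g. -/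
open Matrix

/-- Sparse-to-dense Gauss-Newton equivalence: a solution of the sparse
saddle-point system yields a solution of the dense reduced system. -/
theorem sparse_GN_implies_dense {n p : ℕ}
    (A : Matrix (Fin n) (Fin n) ℝ) (B : Matrix (Fin p) (Fin n) ℝ)
    (C : Matrix (Fin p) (Fin p) ℝ) (Cx : Matrix (Fin n) (Fin n) ℝ)
    (Cp : Matrix (Fin n) (Fin p) ℝ) (hCx : IsUnit Cx)
    (δx δlam : Fin n → ℝ) (δp g : Fin p → ℝ)
    (h1 : A.mulVec δx + Bᵀ.mulVec δp + Cxᵀ.mulVec δlam = 0)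
    (h2 : B.mulVec δx + C.mulVec δp + Cpᵀ.mulVec δlam = -g)
    (h3 : Cx.mulVec δx + Cp.mulVec δp = 0) :
    (((-(Cx⁻¹ * Cp))ᵀ * A * (-(Cx⁻¹ * Cp)) + B * (-(Cx⁻¹ * Cp))
      + (-(Cx⁻¹ * Cp))ᵀ * Bᵀ + C).mulVec δp) = -g := by
  set S : Matrix (Fin n) (Fin p) ℝ := -(Cx⁻¹ * Cp) with hS
  have hinv : Cx⁻¹ * Cx = 1 := nonsing_inv_mul Cx ((isUnit_iff_isUnit_det Cx).mp hCx)
  have hinv' : Cx * Cx⁻¹ = 1 := mul_nonsing_inv Cx ((isUnit_iff_isUnit_det Cx).mp hCx)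
  have hδx : S.mulVec δp = δx := by
    have h3' : Cp.mulVec δp = -(Cx.mulVec δx) := by
      rw [eq_neg_iff_add_eq_zero, add_comm]; exact h3
    rw [hS, neg_mulVec, ← mulVec_mulVec, h3', mulVec_neg, neg_neg,
      mulVec_mulVec, hinv, one_mulVec]
  have hCxS : S ᵀ * Cxᵀ = -Cpᵀ := by
    have h : Cx * S = -Cp := by rw [hS, Matrix.mul_neg, ← Matrix.mul_assoc, hinv', Matrix.one_mul]
    rw [← transpose_mul, h, transpose_neg]
  have h1' : A.mulVec δx + Bᵀ.mulVec δp = -(Cxᵀ.mulVec δlam) := by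
    rw [eq_neg_iff_add_eq_zero]; exact h1
  calc (((S)ᵀ * A * S + B * S + (S)ᵀ * Bᵀ + C).mulVec δp)
      = Sᵀ.mulVec (A.mulVec (S.mulVec δp) + Bᵀ.mulVec δp)
        + (B.mulVec (S.mulVec δp) + C.mulVec δp) := by
        simp [add_mulVec, mulVec_add, mulVec_mulVec, Matrix.mul_assoc]
        ring
    _ = Sᵀ.mulVec (-(Cxᵀ.mulVec δlam)) + (B.mulVec δx + C.mulVec δp) := by
        rw [hδx, h1']
    _ = Cpᵀ.mulVec δlam + (B.mulVec δx + C.mulVec δp) := by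
        rw [mulVec_neg, mulVec_mulVec, hCxS, neg_mulVec, neg_neg]
    _ = -g := by rw [← h2]; abel
end

section
/- Let A be a symmetric positive definite n×n matrix, Cx an n×n invertible matrix, Cp an n×p invertible matrix (so p = n), and gx ∈ ℝⁿ. Suppose (δx, δp, δλ) solves the block system A δx + Cxᵀ δλ = 0, Cpᵀ δλ = -Sᵀ gx where S = -Cx⁻¹ Cp, and Cx δx + Cp δp = 0. Then δp = Cp⁻¹ Cx A⁻¹ gx. -/
open Matrix

/-- Block-solve formula: when `B = 0`, `C = 0` and the right-hand side is
`(0, -Sᵀ gx, 0)`, the sparse Gauss-Newton system has the closed-form solution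
`δp = Cp⁻¹ Cx A⁻¹ gx`. Here `p = n` since `Cp` is square invertible. -/
theorem block_solve {n : ℕ}
    (A Cx Cp : Matrix (Fin n) (Fin n) ℝ)
    (hA : A.PosDef) (hCx : IsUnit Cx) (hCp : IsUnit Cp)
    (gx δx δlam δp : Fin n → ℝ)
    (h1 : A.mulVec δx + Cxᵀ.mulVec δlam = 0)
    (h2 : Cpᵀ.mulVec δlam = -((-(Cx⁻¹ * Cp))ᵀ.mulVec gx))
    (h3 : Cx.mulVec δx + Cp.mulVec δp = 0) :
    δp = (Cp⁻¹ * Cx * A⁻¹).mulVec gx := by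
  have hdCx : IsUnit Cx.det := (isUnit_iff_isUnit_det _).mp hCx
  have hdCp : IsUnit Cp.det := (isUnit_iff_isUnit_det _).mp hCp
  have hdCpT : IsUnit Cpᵀ.det := by simpa [Matrix.det_transpose] using hdCp
  have hdA : IsUnit A.det := isUnit_iff_ne_zero.mpr (ne_of_gt hA.det_pos)
  -- δlam = Cx⁻ᵀ gx
  have hlam : δlam = (Cx⁻¹)ᵀ.mulVec gx := by
    have h2' : Cpᵀ.mulVec δlam = Cpᵀ.mulVec ((Cx⁻¹)ᵀ.mulVec gx) := by
      rw [h2]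
      simp [Matrix.transpose_neg, Matrix.neg_mulVec, Matrix.transpose_mul,
        Matrix.mulVec_mulVec]
    have h := congrArg (fun v => ((Cpᵀ)⁻¹).mulVec v) h2'
    simpa [Matrix.mulVec_mulVec, ← mul_assoc,
      Matrix.nonsing_inv_mul _ hdCpT] using h
  -- δx = -A⁻¹ gx
  have hx : δx = -(A⁻¹.mulVec gx) := by
    have hAx : A.mulVec δx = -gx := by
      have h := eq_neg_of_add_eq_zero_left h1
      rw [hlam, Matrix.mulVec_mulVec, ← Matrix.transpose_mul,
        Matrix.nonsing_inv_mul _ hdCx, Matrix.transpose_one, Matrix.one_mulVec] at h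
      exact h
    have h := congrArg (fun v => A⁻¹.mulVec v) hAx
    simpa [Matrix.mulVec_mulVec, Matrix.nonsing_inv_mul _ hdA, Matrix.neg_mulVec,
      Matrix.mulVec_neg] using h
  -- conclude
  have hCp' : Cp.mulVec δp = (Cx * A⁻¹).mulVec gx := by
    have h := eq_neg_of_add_eq_zero_right h3
    rw [hx] at h
    simpa [Matrix.mulVec_neg, Matrix.mulVec_mulVec] using h
  have h := congrArg (fun v => (Cp⁻¹).mulVec v) hCp'
  simpa [Matrix.mulVec_mulVec, ← mul_assoc,
    Matrix.nonsing_inv_mul _ hdCp] using h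
end

section
/- Let f : ℝⁿ × ℝᵖ → ℝ and c : ℝⁿ × ℝᵖ → ℝⁿ be twice continuously differentiable, with c(x(p),p) = 0 for a twice-differentiable implicit map x(p) and ∂c/∂x invertible. Let λ = -(∂c/∂x)⁻ᵀ(∂f/∂x)ᵀ and let L(x,p,λ) = f(x,p) + λᵀc(x,p). Then the second-order sensitivity term Σᵢ (∂f/∂xᵢ)(d²xᵢ/dp²) equals Σₖ λₖ [Sᵀ(∂²cₖ/∂x²)S + (∂²cₖ/∂x∂p)ᵀS + Sᵀ(∂²cₖ/∂x∂p) + ∂²cₖ/∂p²], where S = dx/dp. -/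
open Matrix

lemma clm_expand {n p : ℕ} {F : Type*} [NormedAddCommGroup F] [NormedSpace ℝ F]
    (L : ((Fin n → ℝ) × (Fin p → ℝ)) →L[ℝ] F) (a : Fin n → ℝ) (b : Fin p → ℝ) :
    L (a, b) = (∑ m : Fin n, a m • L ((Pi.single m 1 : Fin n → ℝ), 0)) + L (0, b) := by
  have h2 : ∀ m : Fin n, a m • ((Pi.single m 1 : Fin n → ℝ), (0 : Fin p → ℝ))
      = ((Pi.single m (a m) : Fin n → ℝ), (0 : Fin p → ℝ)) := by
    intro m
    refine Prod.ext ?_ (by simp)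
    funext l
    simp [Pi.single_apply, mul_ite]
  have h1 : ∑ m : Fin n, a m • ((Pi.single m 1 : Fin n → ℝ), (0 : Fin p → ℝ))
      = ((a, 0) : (Fin n → ℝ) × (Fin p → ℝ)) := by
    rw [Finset.sum_congr rfl fun m _ => h2 m]
    refine Prod.ext ?_ ?_
    · rw [Prod.fst_sum]; simpa using Finset.univ_sum_single a
    · rw [Prod.snd_sum]; simp
  have key : ((a, b) : (Fin n → ℝ) × (Fin p → ℝ))
      = (∑ m : Fin n, a m • ((Pi.single m 1 : Fin n → ℝ), (0 : Fin p → ℝ)))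
        + ((0 : Fin n → ℝ), b) := by
    rw [h1]; simp [Prod.ext_iff]
  rw [key, map_add, map_sum]
  congr 1
  exact Finset.sum_congr rfl fun m _ => L.map_smul _ _

lemma clm2_expand {n p : ℕ}
    (B : ((Fin n → ℝ) × (Fin p → ℝ)) →L[ℝ] ((Fin n → ℝ) × (Fin p → ℝ)) →L[ℝ] ℝ)
    (a a' : Fin n → ℝ) (b b' : Fin p → ℝ) :
    B (a, b) (a', b')
      = (∑ m : Fin n, ∑ l : Fin n, a m * a' l *
            B ((Pi.single m 1 : Fin n → ℝ), 0) ((Pi.single l 1 : Fin n → ℝ), 0))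
        + (∑ m : Fin n, a m * B ((Pi.single m 1 : Fin n → ℝ), 0) (0, b'))
        + (∑ l : Fin n, a' l * B ((0 : Fin n → ℝ), b) ((Pi.single l 1 : Fin n → ℝ), 0))
        + B ((0 : Fin n → ℝ), b) ((0 : Fin n → ℝ), b') := by
  rw [clm_expand B a b]
  simp only [ContinuousLinearMap.add_apply, ContinuousLinearMap.sum_apply,
    ContinuousLinearMap.smul_apply, smul_eq_mul]
  rw [clm_expand (B ((0 : Fin n → ℝ), b)) a' b']
  rw [Finset.sum_congr rfl (fun m _ => by
    rw [clm_expand (B ((Pi.single m 1 : Fin n → ℝ), 0)) a' b'] :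
      ∀ m ∈ Finset.univ, a m * B ((Pi.single m 1 : Fin n → ℝ), 0) (a', b')
        = a m * ((∑ l : Fin n, a' l • B ((Pi.single m 1 : Fin n → ℝ), 0) ((Pi.single l 1 : Fin n → ℝ), 0))
            + B ((Pi.single m 1 : Fin n → ℝ), 0) (0, b')))]
  simp only [smul_eq_mul, mul_add, Finset.sum_add_distrib, Finset.mul_sum, ← mul_assoc]
  ring


/-- Second-order sensitivity term as Lagrangian curvature of the constraints:
`Σᵢ (∂f/∂xᵢ)(d²xᵢ/dp²) = Σₖ λₖ [Sᵀ(∂²cₖ/∂x²)S + (∂²cₖ/∂x∂p)ᵀS + Sᵀ(∂²cₖ/∂x∂p) + ∂²cₖ/∂p²]`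
with the adjoint multipliers `λ = -(∂c/∂x)⁻ᵀ(∂f/∂x)ᵀ` and the sensitivity
matrix `S = dx/dp`. -/
theorem second_order_sensitivity_adjoint {n p : ℕ}
    (f : (Fin n → ℝ) × (Fin p → ℝ) → ℝ)
    (c : (Fin n → ℝ) × (Fin p → ℝ) → (Fin n → ℝ))
    (x : (Fin p → ℝ) → (Fin n → ℝ))
    (hf : ContDiff ℝ 2 f) (hc : ContDiff ℝ 2 c) (hx : ContDiff ℝ 2 x)
    (hcx : ∀ q, c (x q, q) = 0)
    (p₀ : Fin p → ℝ)
    -- Jacobian ∂c/∂x at (x p₀, p₀), assumed invertible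
    (Jx : Matrix (Fin n) (Fin n) ℝ)
    (hJx : Jx = Matrix.of fun k m : Fin n =>
      fderiv ℝ (fun w => c w k) (x p₀, p₀) ((Pi.single m 1 : Fin n → ℝ), 0))
    (hinv : IsUnit Jx)
    -- partial gradient of f with respect to x
    (fx : Fin n → ℝ)
    (hfx : fx = fun m =>
      fderiv ℝ f (x p₀, p₀) ((Pi.single m 1 : Fin n → ℝ), 0))
    -- adjoint multipliers
    (lam : Fin n → ℝ) (hlam : lam = -(Jxᵀ)⁻¹.mulVec fx)
    -- sensitivity matrix S = dx/dp
    (S : Matrix (Fin n) (Fin p) ℝ)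
    (hS : S = Matrix.of fun m j => fderiv ℝ x p₀ (Pi.single j 1) m) :
    (Matrix.of fun j i : Fin p => ∑ m : Fin n,
        fx m * fderiv ℝ (fun q => fderiv ℝ x q (Pi.single i 1) m) p₀
          (Pi.single j 1))
      = ∑ k : Fin n, lam k •
          (Sᵀ * (Matrix.of fun m l : Fin n =>
              fderiv ℝ (fun z => fderiv ℝ (fun w => c w k) z
                  ((Pi.single m 1 : Fin n → ℝ), 0)) (x p₀, p₀)
                  ((Pi.single l 1 : Fin n → ℝ), 0)) * S
            + (Matrix.of fun m i : _ =>
                fderiv ℝ (fun z => fderiv ℝ (fun w => c w k) z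
                    ((Pi.single m 1 : Fin n → ℝ), 0)) (x p₀, p₀)
                    (0, (Pi.single i 1 : Fin p → ℝ)) :
                  Matrix (Fin n) (Fin p) ℝ)ᵀ * S
            + Sᵀ * (Matrix.of fun m i : _ =>
                fderiv ℝ (fun z => fderiv ℝ (fun w => c w k) z
                    ((Pi.single m 1 : Fin n → ℝ), 0)) (x p₀, p₀)
                    (0, (Pi.single i 1 : Fin p → ℝ)) :
                  Matrix (Fin n) (Fin p) ℝ)
            + Matrix.of fun j i : Fin p =>
                fderiv ℝ (fun z => fderiv ℝ (fun w => c w k) z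
                    (0, (Pi.single i 1 : Fin p → ℝ))) (x p₀, p₀)
                    (0, (Pi.single j 1 : Fin p → ℝ))) := by
  have hxd : Differentiable ℝ x := hx.differentiable (by norm_num)
  have hX'cd : ContDiff ℝ 1 (fderiv ℝ x) := hx.fderiv_right (by norm_num)
  have hX'' : HasFDerivAt (fderiv ℝ x) (fderiv ℝ (fderiv ℝ x) p₀) p₀ :=
    (hX'cd.differentiable (by norm_num) p₀).hasFDerivAt
  have hJxe : ∀ k m : Fin n, Jx k m
      = fderiv ℝ (fun w => c w k) (x p₀, p₀) ((Pi.single m 1 : Fin n → ℝ), 0) := by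
    intro k m; rw [hJx]; rfl
  have hSe : ∀ (m : Fin n) (j : Fin p), S m j = fderiv ℝ x p₀ (Pi.single j 1) m := by
    intro m j; rw [hS]; rfl
  -- the key constraint-curvature identity, for each k, j, i
  have key : ∀ (k : Fin n) (j i : Fin p),
      (∑ m : Fin n, fderiv ℝ (fun w => c w k) (x p₀, p₀) ((Pi.single m 1 : Fin n → ℝ), 0)
          * fderiv ℝ (fun q => fderiv ℝ x q (Pi.single i 1) m) p₀ (Pi.single j 1))
      = -(((∑ l : Fin n, (∑ m : Fin n, fderiv ℝ x p₀ (Pi.single j 1) m *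
              fderiv ℝ (fun z => fderiv ℝ (fun w => c w k) z
                ((Pi.single m 1 : Fin n → ℝ), 0)) (x p₀, p₀)
                ((Pi.single l 1 : Fin n → ℝ), 0)) * fderiv ℝ x p₀ (Pi.single i 1) l)
          + (∑ m : Fin n, fderiv ℝ (fun z => fderiv ℝ (fun w => c w k) z
                ((Pi.single m 1 : Fin n → ℝ), 0)) (x p₀, p₀)
                (0, (Pi.single j 1 : Fin p → ℝ)) * fderiv ℝ x p₀ (Pi.single i 1) m)
          + (∑ m : Fin n, fderiv ℝ x p₀ (Pi.single j 1) m *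
              fderiv ℝ (fun z => fderiv ℝ (fun w => c w k) z
                ((Pi.single m 1 : Fin n → ℝ), 0)) (x p₀, p₀)
                (0, (Pi.single i 1 : Fin p → ℝ)))
          + fderiv ℝ (fun z => fderiv ℝ (fun w => c w k) z
              (0, (Pi.single i 1 : Fin p → ℝ))) (x p₀, p₀)
              (0, (Pi.single j 1 : Fin p → ℝ)))) := by
    intro k j i
    have hck : ContDiff ℝ 2 (fun w => c w k) :=
      (ContinuousLinearMap.proj (R := ℝ) (φ := fun _ : Fin n => ℝ) k).contDiff.comp hc
    have hckd : Differentiable ℝ (fun w => c w k) := hck.differentiable (by norm_num)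
    have hC'cd : ContDiff ℝ 1 (fderiv ℝ (fun w => c w k)) := hck.fderiv_right (by norm_num)
    have hC'' : HasFDerivAt (fderiv ℝ (fun w => c w k))
        (fderiv ℝ (fderiv ℝ (fun w => c w k)) (x p₀, p₀)) (x p₀, p₀) :=
      (hC'cd.differentiable (by norm_num) _).hasFDerivAt
    have hsymm : ∀ a b, fderiv ℝ (fderiv ℝ (fun w => c w k)) (x p₀, p₀) a b
        = fderiv ℝ (fderiv ℝ (fun w => c w k)) (x p₀, p₀) b a := fun a b =>
      second_derivative_symmetric (fun y => (hckd y).hasFDerivAt) hC'' a b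
    have hgh : ∀ q, HasFDerivAt (fun q => ((x q, q) : (Fin n → ℝ) × (Fin p → ℝ)))
        ((fderiv ℝ x q).prod (ContinuousLinearMap.id ℝ (Fin p → ℝ))) q := fun q =>
      HasFDerivAt.prodMk (hxd q).hasFDerivAt (hasFDerivAt_id q)
    have hA : ∀ q : Fin p → ℝ, (fderiv ℝ (fun w => c w k) (x q, q)).comp
        ((fderiv ℝ x q).prod (ContinuousLinearMap.id ℝ (Fin p → ℝ))) = 0 := by
      intro q
      have h1' := (hckd (x q, q)).hasFDerivAt.comp (f := fun q => ((x q, q) : (Fin n → ℝ) × (Fin p → ℝ))) q (hgh q)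
      have h1 : HasFDerivAt (fun q : Fin p → ℝ => c (x q, q) k)
          ((fderiv ℝ (fun w => c w k) (x q, q)).comp
            ((fderiv ℝ x q).prod (ContinuousLinearMap.id ℝ (Fin p → ℝ)))) q := h1'
      have h2 : (fun q : Fin p → ℝ => c (x q, q) k) = fun _ => (0 : ℝ) := by
        funext q; rw [hcx q]; rfl
      rw [h2] at h1
      exact h1.unique (hasFDerivAt_const 0 q)
    have hA' : ∀ q, fderiv ℝ (fun w => c w k) (x q, q)
        (fderiv ℝ x q (Pi.single i 1), (Pi.single i 1 : Fin p → ℝ)) = 0 := by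
      intro q
      have h3 := congrArg (fun L : (Fin p → ℝ) →L[ℝ] ℝ => L (Pi.single i 1)) (hA q)
      simpa using h3
    have hDh' := hC''.comp (f := fun q => ((x q, q) : (Fin n → ℝ) × (Fin p → ℝ))) p₀ (hgh p₀)
    have hDh : HasFDerivAt (fun q : Fin p → ℝ => fderiv ℝ (fun w => c w k) (x q, q))
        ((fderiv ℝ (fderiv ℝ (fun w => c w k)) (x p₀, p₀)).comp
          ((fderiv ℝ x p₀).prod (ContinuousLinearMap.id ℝ (Fin p → ℝ)))) p₀ := hDh'
    have hY1h : HasFDerivAt (fun q => fderiv ℝ x q (Pi.single i 1))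
        ((fderiv ℝ (fderiv ℝ x) p₀).flip (Pi.single i 1)) p₀ := by
      have h := hX''.clm_apply (hasFDerivAt_const (Pi.single i 1 : Fin p → ℝ) p₀)
      simpa using h
    have hYh : HasFDerivAt
        (fun q => ((fderiv ℝ x q (Pi.single i 1), (Pi.single i 1 : Fin p → ℝ)) :
          (Fin n → ℝ) × (Fin p → ℝ)))
        (((fderiv ℝ (fderiv ℝ x) p₀).flip (Pi.single i 1)).prod 0) p₀ :=
      HasFDerivAt.prodMk hY1h (hasFDerivAt_const _ p₀)
    have hPhi := hDh.clm_apply hYh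
    have hPhi0 : (fun q : Fin p → ℝ => fderiv ℝ (fun w => c w k) (x q, q)
        (fderiv ℝ x q (Pi.single i 1), (Pi.single i 1 : Fin p → ℝ))) = fun _ => (0 : ℝ) :=
      funext fun q => hA' q
    rw [hPhi0] at hPhi
    have hz := hPhi.unique (hasFDerivAt_const 0 p₀)
    have hstar := congrArg (fun L : (Fin p → ℝ) →L[ℝ] ℝ => L (Pi.single j 1)) hz
    simp only [ContinuousLinearMap.add_apply, ContinuousLinearMap.flip_apply,
      ContinuousLinearMap.comp_apply, ContinuousLinearMap.prod_apply,
      ContinuousLinearMap.coe_id', id_eq, ContinuousLinearMap.zero_apply] at hstar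
    have hTm : ∀ m : Fin n,
        fderiv ℝ (fun q => fderiv ℝ x q (Pi.single i 1) m) p₀ (Pi.single j 1)
        = fderiv ℝ (fderiv ℝ x) p₀ (Pi.single j 1) (Pi.single i 1) m := by
      intro m
      have hm : HasFDerivAt (fun q => fderiv ℝ x q (Pi.single i 1) m)
          ((ContinuousLinearMap.proj (R := ℝ) (φ := fun _ : Fin n => ℝ) m).comp
            ((fderiv ℝ (fderiv ℝ x) p₀).flip (Pi.single i 1))) p₀ :=
        (ContinuousLinearMap.proj (R := ℝ) (φ := fun _ : Fin n => ℝ) m).hasFDerivAt.comp p₀ hY1h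
      rw [hm.fderiv]
      simp
    have hH : ∀ (w e : (Fin n → ℝ) × (Fin p → ℝ)),
        fderiv ℝ (fun z => fderiv ℝ (fun w => c w k) z w) (x p₀, p₀) e
          = fderiv ℝ (fderiv ℝ (fun w => c w k)) (x p₀, p₀) e w := by
      intro w e
      have h := hC''.clm_apply (hasFDerivAt_const w (x p₀, p₀))
      rw [h.fderiv]
      simp
    simp only [hTm, hH]
    have e1 := clm_expand (fderiv ℝ (fun w => c w k) (x p₀, p₀))
      (fderiv ℝ (fderiv ℝ x) p₀ (Pi.single j 1) (Pi.single i 1)) 0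
    rw [Prod.mk_zero_zero, map_zero, add_zero] at e1
    have e2 := clm2_expand (fderiv ℝ (fderiv ℝ (fun w => c w k)) (x p₀, p₀))
      (fderiv ℝ x p₀ (Pi.single j 1)) (fderiv ℝ x p₀ (Pi.single i 1))
      (Pi.single j 1) (Pi.single i 1)
    rw [e1, e2] at hstar
    simp only [smul_eq_mul] at hstar
    -- massage the four groups
    have g1 : (∑ l : Fin n, (∑ m : Fin n, fderiv ℝ x p₀ (Pi.single j 1) m *
          fderiv ℝ (fderiv ℝ (fun w => c w k)) (x p₀, p₀)
            ((Pi.single l 1 : Fin n → ℝ), 0) ((Pi.single m 1 : Fin n → ℝ), 0))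
          * fderiv ℝ x p₀ (Pi.single i 1) l)
        = ∑ m : Fin n, ∑ l : Fin n,
            fderiv ℝ x p₀ (Pi.single j 1) m * fderiv ℝ x p₀ (Pi.single i 1) l *
            fderiv ℝ (fderiv ℝ (fun w => c w k)) (x p₀, p₀)
              ((Pi.single m 1 : Fin n → ℝ), 0) ((Pi.single l 1 : Fin n → ℝ), 0) := by
      rw [Finset.sum_congr rfl fun l _ => Finset.sum_mul _ _ _]
      rw [Finset.sum_comm]
      exact Finset.sum_congr rfl fun m _ => Finset.sum_congr rfl fun l _ => by
        rw [hsymm ((Pi.single l 1 : Fin n → ℝ), 0) ((Pi.single m 1 : Fin n → ℝ), 0)]; ring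
    have g2 : (∑ m : Fin n, fderiv ℝ (fderiv ℝ (fun w => c w k)) (x p₀, p₀)
          ((0 : Fin n → ℝ), Pi.single j 1) ((Pi.single m 1 : Fin n → ℝ), 0)
          * fderiv ℝ x p₀ (Pi.single i 1) m)
        = ∑ l : Fin n, fderiv ℝ x p₀ (Pi.single i 1) l *
            fderiv ℝ (fderiv ℝ (fun w => c w k)) (x p₀, p₀)
              ((0 : Fin n → ℝ), Pi.single j 1) ((Pi.single l 1 : Fin n → ℝ), 0) :=
      Finset.sum_congr rfl fun m _ => mul_comm _ _
    have g3 : (∑ m : Fin n, fderiv ℝ x p₀ (Pi.single j 1) m *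
          fderiv ℝ (fderiv ℝ (fun w => c w k)) (x p₀, p₀)
            ((0 : Fin n → ℝ), Pi.single i 1) ((Pi.single m 1 : Fin n → ℝ), 0))
        = ∑ m : Fin n, fderiv ℝ x p₀ (Pi.single j 1) m *
            fderiv ℝ (fderiv ℝ (fun w => c w k)) (x p₀, p₀)
              ((Pi.single m 1 : Fin n → ℝ), 0) ((0 : Fin n → ℝ), Pi.single i 1) :=
      Finset.sum_congr rfl fun m _ => by rw [hsymm]
    have glhs : (∑ m : Fin n,
          fderiv ℝ (fun w => c w k) (x p₀, p₀) ((Pi.single m 1 : Fin n → ℝ), 0)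
          * fderiv ℝ (fderiv ℝ x) p₀ (Pi.single j 1) (Pi.single i 1) m)
        = ∑ m : Fin n, fderiv ℝ (fderiv ℝ x) p₀ (Pi.single j 1) (Pi.single i 1) m *
            fderiv ℝ (fun w => c w k) (x p₀, p₀) ((Pi.single m 1 : Fin n → ℝ), 0) :=
      Finset.sum_congr rfl fun m _ => mul_comm _ _
    rw [glhs, g1, g2, g3]
    linarith [hstar]
  -- linear algebra: fx m = -∑ k, Jx k m * lam k
  have hdet : IsUnit Jx.det := (Matrix.isUnit_iff_isUnit_det Jx).mp hinv
  have hfx2 : ∀ m : Fin n, fx m = -∑ k : Fin n, Jx k m * lam k := by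
    intro m
    have h1 : Jxᵀ * (Jxᵀ)⁻¹ = 1 :=
      Matrix.mul_nonsing_inv _ (by rwa [Matrix.det_transpose])
    have h2 : Jxᵀ.mulVec lam = -fx := by
      rw [hlam, Matrix.mulVec_neg, Matrix.mulVec_mulVec, h1, Matrix.one_mulVec]
    have h3 := congrFun h2 m
    simp only [Matrix.mulVec, dotProduct, Matrix.transpose_apply, Pi.neg_apply] at h3
    linarith [h3]
  -- assemble
  ext j i
  simp only [Matrix.of_apply, Matrix.sum_apply, Matrix.smul_apply, Matrix.add_apply,
    Matrix.mul_apply, Matrix.transpose_apply, smul_eq_mul]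
  have lhs_eq : (∑ m : Fin n, fx m *
        fderiv ℝ (fun q => fderiv ℝ x q (Pi.single i 1) m) p₀ (Pi.single j 1))
      = ∑ k : Fin n, lam k * -(∑ m : Fin n, Jx k m *
          fderiv ℝ (fun q => fderiv ℝ x q (Pi.single i 1) m) p₀ (Pi.single j 1)) := by
    have h : ∀ m : Fin n, fx m *
        fderiv ℝ (fun q => fderiv ℝ x q (Pi.single i 1) m) p₀ (Pi.single j 1)
        = ∑ k : Fin n, lam k * -(Jx k m *
            fderiv ℝ (fun q => fderiv ℝ x q (Pi.single i 1) m) p₀ (Pi.single j 1)) := by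
      intro m
      rw [hfx2 m, neg_mul, Finset.sum_mul, ← Finset.sum_neg_distrib]
      exact Finset.sum_congr rfl fun k _ => by ring
    rw [Finset.sum_congr rfl fun m _ => h m, Finset.sum_comm]
    exact Finset.sum_congr rfl fun k _ => by
      rw [← Finset.mul_sum, Finset.sum_neg_distrib]
  rw [lhs_eq]
  refine Finset.sum_congr rfl fun k _ => ?_
  congr 1
  have : (∑ m : Fin n, Jx k m *
      fderiv ℝ (fun q => fderiv ℝ x q (Pi.single i 1) m) p₀ (Pi.single j 1))
      = (∑ m : Fin n, fderiv ℝ (fun w => c w k) (x p₀, p₀) ((Pi.single m 1 : Fin n → ℝ), 0)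
          * fderiv ℝ (fun q => fderiv ℝ x q (Pi.single i 1) m) p₀ (Pi.single j 1)) :=
    Finset.sum_congr rfl fun m _ => by rw [hJxe]
  rw [this, key k j i, neg_neg]
  simp only [hSe]
end

section
/- Let f : ℝⁿ × ℝᵖ → ℝ and c : ℝⁿ × ℝᵖ → ℝⁿ be twice continuously differentiable, x(p) a twice-differentiable map with c(x(p),p)=0 and ∂c/∂x invertible, λ = -(∂c/∂x)⁻ᵀ(∂f/∂x)ᵀ, L = f + λᵀc (with λ held fixed when differentiating), and S = dx/dp. Then the full reduced Hessian satisfies d²f(x(p),p)/dp² = Sᵀ (∇²ₓₓL) S + (∇²ₚₓL) S + Sᵀ (∇²ₓₚL) + ∇²ₚₚL. -/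
open Matrix

lemma vec_basis {n : ℕ} (v : Fin n → ℝ) :
    v = ∑ m : Fin n, v m • (Pi.single m 1 : Fin n → ℝ) := by
  funext j
  simp [Pi.single_apply]

lemma prod_decomp {n p : ℕ} (a : Fin n → ℝ) (b : Fin p → ℝ) :
    ((a, b) : (Fin n → ℝ) × (Fin p → ℝ))
      = (∑ m : Fin n, a m • (((Pi.single m 1 : Fin n → ℝ), (0 : Fin p → ℝ)) :
          (Fin n → ℝ) × (Fin p → ℝ))) + ((0 : Fin n → ℝ), b) := by
  have h1 : (∑ m : Fin n, a m • (((Pi.single m 1 : Fin n → ℝ), (0 : Fin p → ℝ)) :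
      (Fin n → ℝ) × (Fin p → ℝ))) = ((a, 0) : (Fin n → ℝ) × (Fin p → ℝ)) := by
    refine Prod.ext ?_ ?_
    · rw [Prod.fst_sum]
      simp only [Prod.smul_mk]
      exact (vec_basis a).symm
    · simp [Prod.snd_sum]
  rw [h1]
  simp [Prod.ext_iff]

lemma fderiv_fderiv_apply {E F : Type*} [NormedAddCommGroup E] [NormedSpace ℝ E]
    [NormedAddCommGroup F] [NormedSpace ℝ F]
    (L : E → F) (hL : ContDiff ℝ 2 L) (pt : E) (u v : E) :
    fderiv ℝ (fun z => fderiv ℝ L z v) pt u = (fderiv ℝ (fderiv ℝ L) pt u) v := by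
  have h1 : ContDiff ℝ 1 (fderiv ℝ L) := hL.fderiv_right (by norm_num)
  rw [fderiv_clm_apply (h1.differentiable one_ne_zero pt) (differentiableAt_const v)]
  simp


/-- Theorem A.2: with the adjoint variables as Lagrange multipliers, the full
reduced Hessian of `p ↦ f(x(p),p)` equals the Lagrangian Hessian projected
onto the constraint tangent space:
`d²f/dp² = Sᵀ(∇²ₓₓL)S + (∇²ₚₓL)S + Sᵀ(∇²ₓₚL) + ∇²ₚₚL`. -/
theorem reduced_hessian_eq_projected_lagrangian_hessian {n p : ℕ}
    (f : (Fin n → ℝ) × (Fin p → ℝ) → ℝ)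
    (c : (Fin n → ℝ) × (Fin p → ℝ) → (Fin n → ℝ))
    (x : (Fin p → ℝ) → (Fin n → ℝ))
    (hf : ContDiff ℝ 2 f) (hc : ContDiff ℝ 2 c) (hx : ContDiff ℝ 2 x)
    (hcx : ∀ q, c (x q, q) = 0)
    (p₀ : Fin p → ℝ)
    (Jx : Matrix (Fin n) (Fin n) ℝ)
    (hJx : Jx = Matrix.of fun k m : Fin n =>
      fderiv ℝ (fun w => c w k) (x p₀, p₀) ((Pi.single m 1 : Fin n → ℝ), 0))
    (hinv : IsUnit Jx)
    (fx : Fin n → ℝ)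
    (hfx : fx = fun m =>
      fderiv ℝ f (x p₀, p₀) ((Pi.single m 1 : Fin n → ℝ), 0))
    -- adjoint multipliers, held fixed in the Lagrangian
    (lam : Fin n → ℝ) (hlam : lam = -(Jxᵀ)⁻¹.mulVec fx)
    -- Lagrangian with fixed multipliers
    (L : (Fin n → ℝ) × (Fin p → ℝ) → ℝ)
    (hL : L = fun z => f z + ∑ k : Fin n, lam k * c z k)
    -- sensitivity matrix S = dx/dp
    (S : Matrix (Fin n) (Fin p) ℝ)
    (hS : S = Matrix.of fun m j => fderiv ℝ x p₀ (Pi.single j 1) m) :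
    (Matrix.of fun j i : Fin p =>
        fderiv ℝ (fun q => fderiv ℝ (fun q' => f (x q', q')) q (Pi.single i 1))
          p₀ (Pi.single j 1))
      = Sᵀ * (Matrix.of fun m l : Fin n =>
            fderiv ℝ (fun z => fderiv ℝ L z ((Pi.single l 1 : Fin n → ℝ), 0))
              (x p₀, p₀) ((Pi.single m 1 : Fin n → ℝ), 0)) * S
        + (Matrix.of fun i m : _ =>
            fderiv ℝ (fun z => fderiv ℝ L z ((Pi.single m 1 : Fin n → ℝ), 0))
              (x p₀, p₀) (0, (Pi.single i 1 : Fin p → ℝ)) :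
            Matrix (Fin p) (Fin n) ℝ) * S
        + Sᵀ * (Matrix.of fun m i : _ =>
            fderiv ℝ (fun z => fderiv ℝ L z (0, (Pi.single i 1 : Fin p → ℝ)))
              (x p₀, p₀) ((Pi.single m 1 : Fin n → ℝ), 0) :
            Matrix (Fin n) (Fin p) ℝ)
        + Matrix.of fun j i : Fin p =>
            fderiv ℝ (fun z => fderiv ℝ L z (0, (Pi.single i 1 : Fin p → ℝ)))
              (x p₀, p₀) (0, (Pi.single j 1 : Fin p → ℝ)) := by
  have one_le_two' : (1 : WithTop ℕ∞) ≤ 2 := by norm_num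
  have h12 : (1 : WithTop ℕ∞) + 1 ≤ 2 := by norm_num
  have hck : ∀ k, ContDiff ℝ 2 (fun z => c z k) := fun k => (contDiff_pi.mp hc) k
  have hL2 : ContDiff ℝ 2 L := by
    rw [hL]
    exact hf.add (ContDiff.sum fun k _ => contDiff_const.mul (hck k))
  have hg : ContDiff ℝ 2 (fun q => (x q, q)) := hx.prodMk contDiff_id
  -- f ∘ g = L ∘ g
  have hfg : (fun q' => f (x q', q')) = fun q' => L (x q', q') := by
    funext q
    rw [hL]
    simp only [hcx q, Pi.zero_apply, mul_zero, Finset.sum_const_zero, add_zero]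
  -- the inner derivative
  have hinner : ∀ i : Fin p, (fun q => fderiv ℝ (fun q' => L (x q', q')) q (Pi.single i 1))
      = fun q => (fderiv ℝ L (x q, q)) ((fderiv ℝ x q) (Pi.single i 1), (Pi.single i 1 : Fin p → ℝ)) := by
    intro i
    funext q
    have hcomp : fderiv ℝ (fun q' => L (x q', q')) q
        = (fderiv ℝ L (x q, q)).comp (fderiv ℝ (fun q' => (x q', q')) q) :=
      fderiv_comp q ((hL2.differentiable two_ne_zero) _) ((hg.differentiable two_ne_zero) q)
    rw [hcomp,
      DifferentiableAt.fderiv_prodMk ((hx.differentiable two_ne_zero) q) differentiableAt_fun_id]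
    simp
  -- fderiv of L
  have hdf : DifferentiableAt ℝ f (x p₀, p₀) := (hf.differentiable two_ne_zero) _
  have hdc : ∀ k, DifferentiableAt ℝ (fun z => c z k) (x p₀, p₀) :=
    fun k => ((hck k).differentiable two_ne_zero) _
  have hDL : fderiv ℝ L (x p₀, p₀)
      = fderiv ℝ f (x p₀, p₀) + ∑ k : Fin n, lam k • fderiv ℝ (fun z => c z k) (x p₀, p₀) := by
    rw [hL, fderiv_fun_add hdf (DifferentiableAt.fun_sum fun k _ => (hdc k).const_mul (lam k))]
    congr 1
    rw [fderiv_fun_sum fun k _ => (hdc k).const_mul (lam k)]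
    exact Finset.sum_congr rfl fun k _ => fderiv_const_mul (hdc k) (lam k)
  -- the x-gradient of L vanishes
  have key : Jxᵀ *ᵥ lam = -fx := by
    have hdet : IsUnit (Jxᵀ).det := by
      rw [Matrix.det_transpose]
      exact (Matrix.isUnit_iff_isUnit_det Jx).mp hinv
    rw [hlam, Matrix.mulVec_neg, Matrix.mulVec_mulVec, Matrix.mul_nonsing_inv _ hdet,
      Matrix.one_mulVec]
  have hgradx : ∀ m : Fin n, fderiv ℝ L (x p₀, p₀) ((Pi.single m 1 : Fin n → ℝ), 0) = 0 := by
    intro m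
    rw [hDL]
    simp only [ContinuousLinearMap.add_apply, ContinuousLinearMap.sum_apply,
      ContinuousLinearMap.coe_smul', Pi.smul_apply, smul_eq_mul]
    have h1 : fderiv ℝ f (x p₀, p₀) ((Pi.single m 1 : Fin n → ℝ), 0) = fx m := by
      rw [hfx]
    have h2 : ∀ k, fderiv ℝ (fun z => c z k) (x p₀, p₀) ((Pi.single m 1 : Fin n → ℝ), 0)
        = Jx k m := by
      intro k; rw [hJx]; rfl
    rw [h1]
    simp only [h2]
    have := congrFun key m
    simp only [Matrix.mulVec, dotProduct, Matrix.transpose_apply, Pi.neg_apply] at this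
    have h3 : ∑ k : Fin n, lam k * Jx k m = ∑ k : Fin n, Jx k m * lam k :=
      Finset.sum_congr rfl fun k _ => mul_comm _ _
    rw [h3, this]
    ring
  have hgradx' : ∀ v : Fin n → ℝ,
      fderiv ℝ L (x p₀, p₀) (v, (0 : Fin p → ℝ)) = 0 := by
    intro v
    conv_lhs => rw [show ((v, (0 : Fin p → ℝ)) : (Fin n → ℝ) × (Fin p → ℝ))
      = (∑ m : Fin n, v m • (((Pi.single m 1 : Fin n → ℝ), (0 : Fin p → ℝ)) :
          (Fin n → ℝ) × (Fin p → ℝ))) + ((0 : Fin n → ℝ), (0 : Fin p → ℝ)) from prod_decomp v 0]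
    rw [map_add, map_sum,
      show ((0 : Fin n → ℝ), (0 : Fin p → ℝ)) = (0 : (Fin n → ℝ) × (Fin p → ℝ)) from rfl,
      map_zero, add_zero]
    refine Finset.sum_eq_zero fun m _ => ?_
    rw [ContinuousLinearMap.map_smul, hgradx m, smul_zero]
  have hDL1 : ContDiff ℝ 1 (fderiv ℝ L) := hL2.fderiv_right h12
  have hDx1 : ContDiff ℝ 1 (fderiv ℝ x) := hx.fderiv_right h12
  have hg1 : ContDiff ℝ 1 (fun q => (x q, q)) := hg.of_le one_le_two'
  have houter : ∀ i j : Fin p,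
      fderiv ℝ (fun q => (fderiv ℝ L (x q, q))
          ((fderiv ℝ x q) (Pi.single i 1), (Pi.single i 1 : Fin p → ℝ))) p₀ (Pi.single j 1)
      = (fderiv ℝ (fderiv ℝ L) (x p₀, p₀)
            ((fderiv ℝ x p₀) (Pi.single j 1), (Pi.single j 1 : Fin p → ℝ)))
          ((fderiv ℝ x p₀) (Pi.single i 1), (Pi.single i 1 : Fin p → ℝ)) := by
    intro i j
    have hA : DifferentiableAt ℝ (fun q => fderiv ℝ L (x q, q)) p₀ :=
      ((hDL1.comp hg1).differentiable one_ne_zero) p₀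
    have hw1 : DifferentiableAt ℝ (fun q => (fderiv ℝ x q) (Pi.single i 1)) p₀ :=
      (hDx1.differentiable one_ne_zero p₀).clm_apply (differentiableAt_const _)
    have hw : DifferentiableAt ℝ
        (fun q => ((fderiv ℝ x q) (Pi.single i 1), (Pi.single i 1 : Fin p → ℝ))) p₀ :=
      hw1.prodMk (differentiableAt_const _)
    rw [fderiv_clm_apply hA hw]
    simp only [ContinuousLinearMap.add_apply, ContinuousLinearMap.comp_apply,
      ContinuousLinearMap.flip_apply]
    have hfw : fderiv ℝ
        (fun q => ((fderiv ℝ x q) (Pi.single i 1), (Pi.single i 1 : Fin p → ℝ))) p₀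
          (Pi.single j 1)
        = ((fderiv ℝ (fun q => (fderiv ℝ x q) (Pi.single i 1)) p₀) (Pi.single j 1),
            (0 : Fin p → ℝ)) := by
      rw [DifferentiableAt.fderiv_prodMk hw1 (differentiableAt_const _)]
      simp
    rw [hfw, hgradx' _, zero_add]
    have hfA : fderiv ℝ (fun q => fderiv ℝ L (x q, q)) p₀
        = (fderiv ℝ (fderiv ℝ L) (x p₀, p₀)).comp (fderiv ℝ (fun q => (x q, q)) p₀) :=
      fderiv_comp p₀ (hDL1.differentiable one_ne_zero _) (hg1.differentiable one_ne_zero p₀)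
    rw [hfA,
      DifferentiableAt.fderiv_prodMk ((hx.differentiable two_ne_zero) p₀) differentiableAt_fun_id]
    simp
  have hT : ∀ (u v : (Fin n → ℝ) × (Fin p → ℝ)),
      fderiv ℝ (fun z => fderiv ℝ L z v) (x p₀, p₀) u
        = (fderiv ℝ (fderiv ℝ L) (x p₀, p₀) u) v :=
    fun u v => fderiv_fderiv_apply L hL2 _ u v
  ext j i
  simp only [Matrix.of_apply, Matrix.add_apply, Matrix.mul_apply, Matrix.transpose_apply]
  rw [hfg, hinner i, houter i j]
  simp only [hT, hS, Matrix.of_apply]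
  conv_lhs => rw [prod_decomp (fderiv ℝ x p₀ (Pi.single j 1)) (Pi.single j 1),
    prod_decomp (fderiv ℝ x p₀ (Pi.single i 1)) (Pi.single i 1)]
  simp only [map_add, map_sum, ContinuousLinearMap.map_smul,
    ContinuousLinearMap.add_apply, ContinuousLinearMap.sum_apply,
    ContinuousLinearMap.smul_apply, smul_eq_mul]
  simp only [mul_add, Finset.sum_add_distrib, Finset.mul_sum, Finset.sum_mul]
  have h1 : (∑ x_1 : Fin n, ∑ x_2 : Fin n,
        fderiv ℝ x p₀ (Pi.single j 1) x_2 *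
          (fderiv ℝ x p₀ (Pi.single i 1) x_1 *
            (fderiv ℝ (fderiv ℝ L) (x p₀, p₀) ((Pi.single x_2 1 : Fin n → ℝ), (0 : Fin p → ℝ)))
              ((Pi.single x_1 1 : Fin n → ℝ), (0 : Fin p → ℝ))))
      = ∑ x_1 : Fin n, ∑ x_2 : Fin n,
          fderiv ℝ x p₀ (Pi.single j 1) x_2 *
              (fderiv ℝ (fderiv ℝ L) (x p₀, p₀) ((Pi.single x_2 1 : Fin n → ℝ), (0 : Fin p → ℝ)))
                ((Pi.single x_1 1 : Fin n → ℝ), (0 : Fin p → ℝ)) *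
            fderiv ℝ x p₀ (Pi.single i 1) x_1 :=
    Finset.sum_congr rfl fun _ _ => Finset.sum_congr rfl fun _ _ => by ring
  have h2 : (∑ x_1 : Fin n,
        fderiv ℝ x p₀ (Pi.single i 1) x_1 *
          (fderiv ℝ (fderiv ℝ L) (x p₀, p₀) ((0 : Fin n → ℝ), (Pi.single j 1 : Fin p → ℝ)))
            ((Pi.single x_1 1 : Fin n → ℝ), (0 : Fin p → ℝ)))
      = ∑ x_1 : Fin n,
          (fderiv ℝ (fderiv ℝ L) (x p₀, p₀) ((0 : Fin n → ℝ), (Pi.single j 1 : Fin p → ℝ)))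
              ((Pi.single x_1 1 : Fin n → ℝ), (0 : Fin p → ℝ)) *
            fderiv ℝ x p₀ (Pi.single i 1) x_1 :=
    Finset.sum_congr rfl fun _ _ => by ring
  rw [h1, h2]
  ring
end

section
/- Let Cx be an n×n invertible real matrix and Cp an n×p matrix of rank p (with p ≤ n). Then for any symmetric positive definite n×n matrix A, p×n matrix B, and symmetric positive semidefinite p×p matrix C such that Sᵀ A S + B S + Sᵀ Bᵀ + C is positive definite with S = -Cx⁻¹Cp, the (2n+p)×(2n+p) block matrix K = [[A, Bᵀ, Cxᵀ],[B, C, Cpᵀ],[Cx, Cp, 0]] is invertible. -/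
open Matrix

/-- Solvability of the sparse Gauss-Newton saddle-point system: the
`(2n+p)×(2n+p)` KKT-type block matrix is invertible when `Cx` is invertible,
`Cp` has full column rank, `A` is SPD, `C` is PSD, and the reduced Hessian
`Sᵀ A S + B S + Sᵀ Bᵀ + C` (with `S = -Cx⁻¹Cp`) is positive definite. -/
theorem sparse_GN_system_invertible {n p : ℕ} (hnp : p ≤ n)
    (Cx : Matrix (Fin n) (Fin n) ℝ) (hCx : IsUnit Cx)
    (Cp : Matrix (Fin n) (Fin p) ℝ) (hCp : Cp.rank = p)
    (A : Matrix (Fin n) (Fin n) ℝ) (hA : A.PosDef)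
    (B : Matrix (Fin p) (Fin n) ℝ)
    (C : Matrix (Fin p) (Fin p) ℝ) (hC : C.PosSemidef)
    (hH : (((-(Cx⁻¹ * Cp))ᵀ * A * (-(Cx⁻¹ * Cp)) + B * (-(Cx⁻¹ * Cp))
      + (-(Cx⁻¹ * Cp))ᵀ * Bᵀ + C)).PosDef) :
    IsUnit (Matrix.fromBlocks
      (Matrix.fromBlocks A Bᵀ B C)
      (Matrix.fromCols Cx Cp)ᵀ
      (Matrix.fromCols Cx Cp)
      (0 : Matrix (Fin n) (Fin n) ℝ)) := by
  set S : Matrix (Fin n) (Fin p) ℝ := -(Cx⁻¹ * Cp) with hS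
  rw [← Matrix.mulVec_injective_iff_isUnit]
  intro a b hab
  rw [← sub_eq_zero]
  set v := a - b with hvdef
  have hv : (Matrix.fromBlocks (Matrix.fromBlocks A Bᵀ B C) (Matrix.fromCols Cx Cp)ᵀ
      (Matrix.fromCols Cx Cp) (0 : Matrix (Fin n) (Fin n) ℝ)) *ᵥ v = 0 := by
    rw [hvdef, Matrix.mulVec_sub, hab, sub_self]
  set x : Fin n → ℝ := fun i => v (Sum.inl (Sum.inl i)) with hxdef
  set y : Fin p → ℝ := fun i => v (Sum.inl (Sum.inr i)) with hydef
  set z : Fin n → ℝ := fun i => v (Sum.inr i) with hzdef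
  have hv' : v = Sum.elim (Sum.elim x y) z := by
    funext i; rcases i with (i | i) | i <;> rfl
  rw [hv'] at hv
  simp only [Matrix.transpose_fromCols, Matrix.fromBlocks_mulVec,
    Matrix.fromRows_mulVec, Matrix.fromCols_mulVec_sumElim,
    Sum.elim_comp_inl, Sum.elim_comp_inr, Matrix.zero_mulVec, add_zero] at hv
  have h1 : A *ᵥ x + Bᵀ *ᵥ y + Cxᵀ *ᵥ z = 0 := by
    funext i
    have := congrFun hv (Sum.inl (Sum.inl i))
    simpa [add_assoc] using this
  have h2 : B *ᵥ x + C *ᵥ y + Cpᵀ *ᵥ z = 0 := by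
    funext i
    have := congrFun hv (Sum.inl (Sum.inr i))
    simpa [add_assoc] using this
  have h3 : Cx *ᵥ x + Cp *ᵥ y = 0 := by
    funext i
    have := congrFun hv (Sum.inr i)
    simpa using this
  have hCxinv : Cx⁻¹ * Cx = 1 := Matrix.nonsing_inv_mul Cx (Matrix.isUnit_iff_isUnit_det Cx |>.mp hCx)
  have hx : x = S *ᵥ y := by
    have h3' : Cx *ᵥ x = -(Cp *ᵥ y) := by
      rw [eq_neg_iff_add_eq_zero]; exact h3
    calc x = (Cx⁻¹ * Cx) *ᵥ x := by rw [hCxinv, Matrix.one_mulVec]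
    _ = Cx⁻¹ *ᵥ (Cx *ᵥ x) := by rw [Matrix.mulVec_mulVec]
    _ = Cx⁻¹ *ᵥ (-(Cp *ᵥ y)) := by rw [h3']
    _ = S *ᵥ y := by
        rw [hS, Matrix.mulVec_neg, Matrix.neg_mulVec, Matrix.mulVec_mulVec]
  -- the reduced-Hessian quadratic form at y vanishes
  have hquad : y ⬝ᵥ ((Sᵀ * A * S + B * S + Sᵀ * Bᵀ + C) *ᵥ y) = 0 := by
    have hHy : (Sᵀ * A * S + B * S + Sᵀ * Bᵀ + C) *ᵥ y
        = Sᵀ *ᵥ (A *ᵥ x + Bᵀ *ᵥ y) + (B *ᵥ x + C *ᵥ y) := by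
      simp only [Matrix.add_mulVec, ← Matrix.mulVec_mulVec, ← hx, Matrix.mulVec_add]
      abel
    have e1 : A *ᵥ x + Bᵀ *ᵥ y = -(Cxᵀ *ᵥ z) := by
      rw [eq_neg_iff_add_eq_zero]; exact h1
    have e2 : B *ᵥ x + C *ᵥ y = -(Cpᵀ *ᵥ z) := by
      rw [eq_neg_iff_add_eq_zero]; exact h2
    rw [hHy, e1, e2, dotProduct_add, Matrix.mulVec_neg, dotProduct_neg, dotProduct_neg,
      Matrix.dotProduct_mulVec y Sᵀ, Matrix.vecMul_transpose, ← hx,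
      Matrix.dotProduct_mulVec x Cxᵀ, Matrix.vecMul_transpose,
      Matrix.dotProduct_mulVec y Cpᵀ, Matrix.vecMul_transpose,
      ← neg_add, ← add_dotProduct, h3, zero_dotProduct, neg_zero]
  have hy : y = 0 := by
    by_contra hy0
    have := hH.dotProduct_mulVec_pos hy0
    rw [hS] at hquad
    simp only [RCLike.star_def, star_trivial] at this
    rw [hquad] at this
    exact lt_irrefl 0 this
  have hx0 : x = 0 := by rw [hx, hy, Matrix.mulVec_zero]
  have hz : z = 0 := by
    have h1' : Cxᵀ *ᵥ z = 0 := by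
      have := h1
      rw [hx0, hy, Matrix.mulVec_zero, Matrix.mulVec_zero, zero_add, zero_add] at this
      exact this
    have hCxT : IsUnit Cxᵀ := by
      rw [Matrix.isUnit_iff_isUnit_det, Matrix.det_transpose,
        ← Matrix.isUnit_iff_isUnit_det]; exact hCx
    have hinj := Matrix.mulVec_injective_iff_isUnit.mpr hCxT
    have : Cxᵀ *ᵥ z = Cxᵀ *ᵥ 0 := by rw [h1', Matrix.mulVec_zero]
    exact hinj this
  rw [hv', hx0, hy, hz]
  simp
end
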